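/- Let 0 < θ ≤ 2, let a⁰ = {a_j⁰}_{j≥0} ∈ l², b⁰ = {b_j⁰}_{j≥0} ∈ l², and let the forcing f satisfy ∑_{j≥0} λ_j^{-2} ∫₀ᵀ f_j²(t) dt < ∞. Then any two Leray-Hopf solutions on [0,T] of the dyadic MHD model with forward and backward energy cascade with initial data (a⁰, b⁰) and forcing f coincide on [0,T]. -/

import Mathlib

open Real MeasureTheory Set

noncomputable section

/-- `lamPow l j s = λ_j^s` where `λ_j = l^j`. -/
def lamPow (l : ℝ) (j : ℕ) (s : ℝ) : ℝ := (l ^ j : ℝ) ^ s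

/-- Value of a shell-indexed quantity at the previous index,
with the convention that the `(-1)`-st entry vanishes. -/
def dprev (x : ℕ → ℝ → ℝ) : ℕ → ℝ → ℝ
  | 0 => fun _ => 0
  | j + 1 => x j

/-- `(a, b)` is a weak solution on `[0,T]` of the dyadic MHD model with forward
and backward energy cascade (unit viscosity and resistivity), with forcing `f`:
`a_j' + λ_j² a_j + λ_j^θ a_j a_{j+1} − λ_{j-1}^θ a_{j-1}² − λ_j^θ b_j b_{j+1} + λ_{j-1}^θ b_{j-1}² = f_j`,
`b_j' + λ_j² b_j + λ_j^θ a_j b_{j+1} − λ_j^θ b_j a_{j+1} = 0`,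
with `a_j, b_j ∈ C¹([0,T])` and `a(t), b(t) ∈ l²` for each `t`. -/
def IsWeakSolutionFB (l θ T : ℝ) (f a b : ℕ → ℝ → ℝ) : Prop :=
  (∀ j, ContDiffOn ℝ 1 (a j) (Icc 0 T)) ∧
  (∀ j, ContDiffOn ℝ 1 (b j) (Icc 0 T)) ∧
  (∀ t ∈ Icc 0 T, Summable fun j => (a j t) ^ 2) ∧
  (∀ t ∈ Icc 0 T, Summable fun j => (b j t) ^ 2) ∧
  (∀ j, ∀ t ∈ Icc 0 T,
    derivWithin (a j) (Icc 0 T) t + lamPow l j 2 * a j t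
      + lamPow l j θ * a j t * a (j + 1) t
      - dprev (fun i t => lamPow l i θ * (a i t) ^ 2) j t
      - lamPow l j θ * b j t * b (j + 1) t
      + dprev (fun i t => lamPow l i θ * (b i t) ^ 2) j t = f j t) ∧
  (∀ j, ∀ t ∈ Icc 0 T,
    derivWithin (b j) (Icc 0 T) t + lamPow l j 2 * b j t
      + lamPow l j θ * a j t * b (j + 1) t
      - lamPow l j θ * b j t * a (j + 1) t = 0)

/-- `(a, b)` is a Leray-Hopf solution on `[0,T]` of the dyadic MHD model with
forward and backward energy cascade: a weak solution belonging to
`L^∞(0,T; l²) ∩ L²(0,T; H¹)` and satisfying the energy inequality. -/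
def IsLerayHopfFB (l θ T : ℝ) (f a b : ℕ → ℝ → ℝ) : Prop :=
  IsWeakSolutionFB l θ T f a b ∧
  (∃ M : ℝ, ∀ t ∈ Icc 0 T, (∑' j, (a j t) ^ 2) + (∑' j, (b j t) ^ 2) ≤ M) ∧
  Summable (fun j => ∫ t in (0:ℝ)..T, lamPow l j 2 * ((a j t) ^ 2 + (b j t) ^ 2)) ∧
  (∀ t ∈ Icc 0 T,
    (∑' j, ((a j t) ^ 2 + (b j t) ^ 2))
      + 2 * ∑' j, ∫ τ in (0:ℝ)..t, lamPow l j 2 * ((a j τ) ^ 2 + (b j τ) ^ 2)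
    ≤ (∑' j, ((a j 0) ^ 2 + (b j 0) ^ 2))
      + 2 * ∑' j, ∫ τ in (0:ℝ)..t, f j τ * a j τ)

/-!
Write `e_j = (a_j - u_j)² + (b_j - v_j)²` for the shell energies of the difference of two
solutions and `S = ∑_j e_j`. Subtracting the equations, `e_j' = -2λ_j² e_j + N_j`, where every term
of `N_j` has the form `λ_i^θ · (difference) · (value)` with `i ∈ {j-1, j}` and the factors taken
from the shells `j-1, j, j+1`. Because `θ ≤ 2`, the coefficient `λ_i^θ` is at most a product of
two neighbouring wavenumbers, so Young's inequality lets the dissipation absorb each such term: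
`e_j' ≤ 6 S w_j`, where `w_j` is the `H¹` density of both solutions on the shells `j-1, j, j+1`.
Integrating and summing over `j` gives `S(t) ≤ ∫₀ᵗ (6 ∑_j w_j) S`; the weight is integrable since
both solutions lie in `L²(0,T; H¹)`, `S` is bounded since they lie in `L^∞(0,T; l²)`, and
Grönwall's inequality forces `S ≡ 0`.
-/

open Filter Topology

theorem eqOn_zero_of_le_integral_mul {T : ℝ} {g S : ℝ → ℝ}
    (hg : IntervalIntegrable g volume 0 T)
    (hgS : IntervalIntegrable (fun τ => g τ * S τ) volume 0 T)
    (hg0 : ∀ τ ∈ Icc 0 T, 0 ≤ g τ) (hS0 : ∀ t ∈ Icc 0 T, 0 ≤ S t)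
    (hS : ∀ t ∈ Icc 0 T, S t ≤ ∫ τ in 0..t, g τ * S τ) :
    EqOn S 0 (Icc 0 T) := by
  rcases lt_or_ge T 0 with hT | hT
  · simp [Icc_eq_empty_of_lt hT]
  set F : ℝ → ℝ := fun t => ∫ τ in 0..t, g τ * S τ
  set Ψ : ℝ → ℝ := fun t => ∫ τ in 0..t, g τ
  rw [intervalIntegrable_iff_integrableOn_Icc_of_le hT] at hg hgS
  have h0T : (0 : ℝ) ∈ Icc 0 T := ⟨le_rfl, hT⟩
  have hF_sub {x y : ℝ} (hx : x ∈ Icc 0 T) (hy : y ∈ Icc 0 T) :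
      F y - F x = ∫ τ in x..y, g τ * S τ :=
    intervalIntegral.integral_interval_sub_left
      (hgS.mono_set (uIcc_subset_Icc h0T hy)).intervalIntegrable
      (hgS.mono_set (uIcc_subset_Icc h0T hx)).intervalIntegrable
  have hΨ_sub {x y : ℝ} (hx : x ∈ Icc 0 T) (hy : y ∈ Icc 0 T) :
      Ψ y - Ψ x = ∫ τ in x..y, g τ :=
    intervalIntegral.integral_interval_sub_left
      (hg.mono_set (uIcc_subset_Icc h0T hy)).intervalIntegrable
      (hg.mono_set (uIcc_subset_Icc h0T hx)).intervalIntegrable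
  have hF_mono {x y : ℝ} (hx : x ∈ Icc 0 T) (hy : y ∈ Icc 0 T) (hxy : x ≤ y) : F x ≤ F y := by
    rw [← sub_nonneg, hF_sub hx hy]
    refine intervalIntegral.integral_nonneg hxy fun τ hτ => ?_
    have hτ' : τ ∈ Icc 0 T := ⟨hx.1.trans hτ.1, hτ.2.trans hy.2⟩
    exact mul_nonneg (hg0 τ hτ') (hS0 τ hτ')
  -- On `[x, y]` we have `S ≤ F ≤ F y`, so `F` grows by at most `(Ψ y - Ψ x) F y`.
  have hF_incr {x y : ℝ} (hx : x ∈ Icc 0 T) (hy : y ∈ Icc 0 T) (hxy : x ≤ y) :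
      F y - F x ≤ (Ψ y - Ψ x) * F y := by
    rw [hF_sub hx hy, hΨ_sub hx hy, ← intervalIntegral.integral_mul_const]
    refine intervalIntegral.integral_mono_on hxy
      (hgS.mono_set (uIcc_subset_Icc hx hy)).intervalIntegrable
      ((hg.mono_set (uIcc_subset_Icc hx hy)).intervalIntegrable.mul_const _) fun τ hτ => ?_
    have hτ' : τ ∈ Icc 0 T := ⟨hx.1.trans hτ.1, hτ.2.trans hy.2⟩
    exact mul_le_mul_of_nonneg_left ((hS τ hτ').trans (hF_mono hτ' hy hτ.2)) (hg0 τ hτ')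
  suffices hF : Icc 0 T ⊆ {t | F t = 0} from fun t ht =>
    le_antisymm ((hS t ht).trans_eq (hF ht)) (hS0 t ht)
  have hF_cont : ContinuousOn F (Icc 0 T) := by
    simpa [uIcc_of_le hT] using intervalIntegral.continuousOn_primitive_interval
      (a := 0) (b := T) (by rwa [uIcc_of_le hT])
  have hΨ_cont : ContinuousOn Ψ (Icc 0 T) := by
    simpa [uIcc_of_le hT] using intervalIntegral.continuousOn_primitive_interval
      (a := 0) (b := T) (by rwa [uIcc_of_le hT])
  refine IsClosed.Icc_subset_of_forall_mem_nhdsWithin ?_ (by simp [F]) ?_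
  · rw [inter_comm]
    exact hF_cont.preimage_isClosed_of_isClosed isClosed_Icc isClosed_singleton
  rintro x ⟨hFx, hx⟩
  have hIcc : Icc 0 T ∈ 𝓝[>] x :=
    mem_of_superset (Ioo_mem_nhdsGT hx.2) fun y hy => ⟨hx.1.trans hy.1.le, hy.2.le⟩
  have hΨx : ∀ᶠ y in 𝓝[>] x, Ψ y < Ψ x + 1 / 2 :=
    ((hΨ_cont x (Ico_subset_Icc_self hx)).mono_of_mem_nhdsWithin hIcc).eventually
      (gt_mem_nhds (by linarith))
  filter_upwards [hΨx, Ioo_mem_nhdsGT hx.2] with y hΨy hy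
  have hy' : y ∈ Icc 0 T := ⟨hx.1.trans hy.1.le, hy.2.le⟩
  have hFx : F x = 0 := hFx
  have hFy : 0 ≤ F y := by simpa [F] using hF_mono h0T hy' hy'.1
  have := hF_incr (Ico_subset_Icc_self hx) hy' hy.1.le
  change F y = 0
  nlinarith

theorem integrable_tsum_of_summable_integral_norm {α E : Type*} [MeasurableSpace α]
    {μ : Measure α} [NormedAddCommGroup E] [CompleteSpace E] [SecondCountableTopology E]
    [MeasurableSpace E] [BorelSpace E] {F : ℕ → α → E} (hF : ∀ j, Integrable (F j) μ)
    (hsum : Summable fun j => ∫ x, ‖F j x‖ ∂μ) : Integrable (fun x => ∑' j, F j x) μ := by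
  refine ⟨(AEMeasurable.tsum fun j => (hF j).aemeasurable).aestronglyMeasurable, ?_⟩
  calc ∫⁻ x, ‖∑' j, F j x‖ₑ ∂μ ≤ ∫⁻ x, ∑' j, ‖F j x‖ₑ ∂μ :=
        lintegral_mono fun x => enorm_tsum_le_tsum_enorm
    _ = ∑' j, ENNReal.ofReal (∫ x, ‖F j x‖ ∂μ) := by
        rw [lintegral_tsum fun j => (hF j).aemeasurable.enorm]
        simp_rw [ofReal_integral_norm_eq_lintegral_enorm (hF _)]
    _ < ⊤ := by
        rw [← ENNReal.ofReal_tsum_of_nonneg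
          (fun j => integral_nonneg fun x => norm_nonneg _) hsum]
        exact ENNReal.ofReal_lt_top

theorem integral_derivWithin_Icc_of_contDiffOn {f : ℝ → ℝ} {a b t : ℝ}
    (hf : ContDiffOn ℝ 1 f (Icc a b)) (ht : t ∈ Icc a b) :
    ∫ τ in a..t, derivWithin f (Icc a b) τ = f t - f a := by
  rw [← intervalIntegral.integral_derivWithin_Icc_of_contDiffOn_Icc
    (hf.mono (Icc_subset_Icc_right ht.2)) ht.1, intervalIntegral.integral_of_le ht.1,
    intervalIntegral.integral_of_le ht.1, ← restrict_Ioo_eq_restrict_Ioc]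
  refine integral_congr_ae ?_
  filter_upwards [self_mem_ae_restrict measurableSet_Ioo] with x hx
  rw [derivWithin_of_mem_nhds (Icc_mem_nhds hx.1 (hx.2.trans_le ht.2)),
    derivWithin_of_mem_nhds (Icc_mem_nhds hx.1 hx.2)]

theorem summable_sq_sub {x y : ℕ → ℝ} (hx : Summable fun j => x j ^ 2)
    (hy : Summable fun j => y j ^ 2) : Summable fun j => (x j - y j) ^ 2 :=
  ((hx.mul_left 2).add (hy.mul_left 2)).of_nonneg_of_le (fun j => sq_nonneg _)
    fun j => by linarith [sq_nonneg (x j + y j)]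

theorem tsum_sq_sub_le {x y : ℕ → ℝ} (hx : Summable fun j => x j ^ 2)
    (hy : Summable fun j => y j ^ 2) :
    ∑' j, (x j - y j) ^ 2 ≤ 2 * ∑' j, x j ^ 2 + 2 * ∑' j, y j ^ 2 := by
  rw [← tsum_mul_left, ← tsum_mul_left, ← Summable.tsum_add (hx.mul_left 2) (hy.mul_left 2)]
  exact Summable.tsum_le_tsum (fun j => by linarith [sq_nonneg (x j + y j)])
    (summable_sq_sub hx hy) ((hx.mul_left 2).add (hy.mul_left 2))

theorem summable_prev_add_add_next {c : ℕ → ℝ} (hc : Summable c) :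
    Summable fun j => c (j - 1) + c j + c (j + 1) :=
  (((summable_nat_add_iff 1).1 (by simpa using hc)).add hc).add ((summable_nat_add_iff 1).2 hc)

theorem summable_integral_mul_of_le {α : Type*} [MeasurableSpace α] {μ : Measure α}
    {G : ℕ → α → ℝ} {S : α → ℝ} {M : ℝ} (hG : ∀ j, Integrable (G j) μ) (hG0 : ∀ j x, 0 ≤ G j x)
    (hGsum : Summable fun j => ∫ x, G j x ∂μ) (hS : AEStronglyMeasurable S μ)
    (hS0 : ∀ x, 0 ≤ S x) (hSM : ∀ᵐ x ∂μ, S x ≤ M) :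
    (∀ j, Integrable (fun x => G j x * S x) μ) ∧ Summable fun j => ∫ x, G j x * S x ∂μ := by
  have hint (j : ℕ) : Integrable (fun x => G j x * S x) μ := by
    simpa only [mul_comm (S _)] using (hG j).bdd_mul hS
      (hSM.mono fun x hx => by rwa [Real.norm_of_nonneg (hS0 x)])
  refine ⟨hint, (hGsum.mul_left M).of_nonneg_of_le
    (fun j => integral_nonneg fun x => mul_nonneg (hG0 j x) (hS0 x)) fun j => ?_⟩
  rw [← integral_const_mul]
  exact integral_mono_ae (hint j) ((hG j).const_mul M) <| hSM.mono fun x hx =>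
    (mul_le_mul_of_nonneg_left hx (hG0 j x)).trans_eq (mul_comm _ _)

theorem two_mul_le_of_sq_le {n lam lam' mu w c d Sb : ℝ} (hn : 0 < n) (hlam : 0 < lam)
    (hmu : 0 ≤ mu) (hmu' : mu ≤ lam * lam') (hd : d ^ 2 ≤ Sb) :
    2 * w * (mu * c * d) ≤ lam ^ 2 / n * w ^ 2 + n * Sb * (lam' * c) ^ 2 := by
  have hamgm : 2 * w * (mu * c * d) ≤ lam ^ 2 / n * w ^ 2 + n / lam ^ 2 * (mu * c * d) ^ 2 := by
    rw [div_mul_eq_mul_div, div_mul_eq_mul_div, div_add_div _ _ hn.ne' (by positivity),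
      le_div_iff₀ (by positivity)]
    nlinarith [sq_nonneg (lam ^ 2 * w - n * (mu * c * d))]
  have hsq : (mu * c * d) ^ 2 ≤ lam ^ 2 * (Sb * (lam' * c) ^ 2) := by
    have := pow_le_pow_left₀ hmu hmu' 2
    calc (mu * c * d) ^ 2 = mu ^ 2 * c ^ 2 * d ^ 2 := by ring
      _ ≤ (lam * lam') ^ 2 * c ^ 2 * Sb := by gcongr
      _ = _ := by ring
  calc _ ≤ _ := hamgm
    _ ≤ lam ^ 2 / n * w ^ 2 + n / lam ^ 2 * (lam ^ 2 * (Sb * (lam' * c) ^ 2)) := by gcongr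
    _ = _ := by field_simp

theorem shell_energy_deriv_le {lam lamP lamN mu muP Sb a b u v aP bP uP vP aN bN uN vN : ℝ}
    (hlam : 0 < lam) (hmu : 0 ≤ mu) (hmu_le : mu ≤ lam * lam) (hmuN : mu ≤ lam * lamN)
    (hmuP : 0 ≤ muP) (hmuP_le : muP ≤ lam * lamP)
    (hP : (aP - uP) ^ 2 ≤ Sb ∧ (bP - vP) ^ 2 ≤ Sb) (h : (a - u) ^ 2 ≤ Sb ∧ (b - v) ^ 2 ≤ Sb)
    (hN : (aN - uN) ^ 2 ≤ Sb ∧ (bN - vN) ^ 2 ≤ Sb) :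
    2 * (a - u) * (-lam ^ 2 * (a - u) - mu * (a * aN - u * uN) + muP * (aP ^ 2 - uP ^ 2)
        + mu * (b * bN - v * vN) - muP * (bP ^ 2 - vP ^ 2))
      + 2 * (b - v) * (-lam ^ 2 * (b - v) - mu * (a * bN - u * vN) + mu * (b * aN - v * uN))
    ≤ 6 * (lamP ^ 2 * (aP ^ 2 + bP ^ 2 + uP ^ 2 + vP ^ 2)
      + lam ^ 2 * (a ^ 2 + b ^ 2 + u ^ 2 + v ^ 2)
      + lamN ^ 2 * (aN ^ 2 + bN ^ 2 + uN ^ 2 + vN ^ 2)) * Sb := by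
  have hSb : 0 ≤ Sb := (sq_nonneg _).trans h.1
  -- Each nonlinear difference splits as `x y - x' y' = (x - x') y + x' (y - y')`; Young's
  -- inequality absorbs every piece in the dissipation.
  have h3 : (0 : ℝ) < 3 := by norm_num
  have h2 : (0 : ℝ) < 2 := by norm_num
  have := two_mul_le_of_sq_le (w := a - u) (c := -aN) h3 hlam hmu hmuN h.1
  have := two_mul_le_of_sq_le (w := a - u) (c := -u) h3 hlam hmu hmu_le hN.1
  have := two_mul_le_of_sq_le (w := a - u) (c := aP + uP) h3 hlam hmuP hmuP_le hP.1
  have := two_mul_le_of_sq_le (w := a - u) (c := bN) h3 hlam hmu hmuN h.2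
  have := two_mul_le_of_sq_le (w := a - u) (c := v) h3 hlam hmu hmu_le hN.2
  have := two_mul_le_of_sq_le (w := a - u) (c := -(bP + vP)) h3 hlam hmuP hmuP_le hP.2
  have := two_mul_le_of_sq_le (w := b - v) (c := -bN) h2 hlam hmu hmuN h.1
  have := two_mul_le_of_sq_le (w := b - v) (c := -u) h2 hlam hmu hmu_le hN.2
  have := two_mul_le_of_sq_le (w := b - v) (c := aN) h2 hlam hmu hmuN h.2
  have := two_mul_le_of_sq_le (w := b - v) (c := v) h2 hlam hmu hmu_le hN.1
  linarith [mul_nonneg hSb (sq_nonneg (lamP * (aP - uP))),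
    mul_nonneg hSb (sq_nonneg (lamP * (bP - vP))),
    mul_nonneg hSb (sq_nonneg (lam * a)), mul_nonneg hSb (sq_nonneg (lam * b)),
    mul_nonneg hSb (sq_nonneg (lam * u)), mul_nonneg hSb (sq_nonneg (lam * v)),
    mul_nonneg hSb (sq_nonneg (lamN * aN)), mul_nonneg hSb (sq_nonneg (lamN * bN)),
    mul_nonneg hSb (sq_nonneg (lamN * uN)), mul_nonneg hSb (sq_nonneg (lamN * vN))]

theorem lamPow_two (l : ℝ) (j : ℕ) : lamPow l j 2 = (l ^ j) ^ 2 := Real.rpow_two _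

theorem lamPow_nonneg {l : ℝ} (hl : 0 ≤ l) (j : ℕ) (s : ℝ) : 0 ≤ lamPow l j s :=
  Real.rpow_nonneg (pow_nonneg hl j) s

theorem lamPow_le_pow_mul_pow {l θ : ℝ} (hl : 1 ≤ l) (hθ : θ ≤ 2) {j i i' : ℕ} (hi : j ≤ i)
    (hi' : j ≤ i') : lamPow l j θ ≤ l ^ i * l ^ i' :=
  calc lamPow l j θ ≤ (l ^ j) ^ 2 :=
        (Real.rpow_le_rpow_of_exponent_le (one_le_pow₀ hl) hθ).trans_eq (Real.rpow_two _)
    _ ≤ l ^ i * l ^ i' := by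
        rw [sq]; exact mul_le_mul (pow_le_pow_right₀ hl hi) (pow_le_pow_right₀ hl hi')
          (by positivity) (by positivity)

def diffEnergy (a b u v : ℕ → ℝ → ℝ) (j : ℕ) (t : ℝ) : ℝ :=
  (a j t - u j t) ^ 2 + (b j t - v j t) ^ 2

def shellWeight (l : ℝ) (a b u v : ℕ → ℝ → ℝ) (j : ℕ) (t : ℝ) : ℝ :=
  lamPow l j 2 * ((a j t) ^ 2 + (b j t) ^ 2 + (u j t) ^ 2 + (v j t) ^ 2)

/-- `j - 1` is truncated subtraction: at `j = 0` shell `0` is counted twice, which only weakens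
the bounds this weight enters. -/
def nbhdWeight (l : ℝ) (a b u v : ℕ → ℝ → ℝ) (j : ℕ) (t : ℝ) : ℝ :=
  shellWeight l a b u v (j - 1) t + shellWeight l a b u v j t + shellWeight l a b u v (j + 1) t

section DifferenceEnergy

variable {l θ T : ℝ} {f a b u v : ℕ → ℝ → ℝ}

theorem diffEnergy_nonneg (j : ℕ) (t : ℝ) : 0 ≤ diffEnergy a b u v j t := by
  unfold diffEnergy; positivity

theorem shellWeight_nonneg (hl : 0 ≤ l) (j : ℕ) (t : ℝ) : 0 ≤ shellWeight l a b u v j t :=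
  mul_nonneg (lamPow_nonneg hl j 2) (by positivity)

theorem nbhdWeight_nonneg (hl : 0 ≤ l) (j : ℕ) (t : ℝ) : 0 ≤ nbhdWeight l a b u v j t := by
  unfold nbhdWeight
  have := shellWeight_nonneg (a := a) (b := b) (u := u) (v := v) hl
  linarith [this (j - 1) t, this j t, this (j + 1) t]

theorem contDiffOn_diffEnergy (hab : IsWeakSolutionFB l θ T f a b)
    (huv : IsWeakSolutionFB l θ T f u v) (j : ℕ) :
    ContDiffOn ℝ 1 (diffEnergy a b u v j) (Icc 0 T) :=
  (((hab.1 j).sub (huv.1 j)).pow 2).add (((hab.2.1 j).sub (huv.2.1 j)).pow 2)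

theorem continuousOn_shellWeight (hab : IsWeakSolutionFB l θ T f a b)
    (huv : IsWeakSolutionFB l θ T f u v) (i : ℕ) :
    ContinuousOn (shellWeight l a b u v i) (Icc 0 T) :=
  continuousOn_const.mul (((((hab.1 i).continuousOn.pow 2).add
    ((hab.2.1 i).continuousOn.pow 2)).add ((huv.1 i).continuousOn.pow 2)).add
    ((huv.2.1 i).continuousOn.pow 2))

theorem continuousOn_nbhdWeight (hab : IsWeakSolutionFB l θ T f a b)
    (huv : IsWeakSolutionFB l θ T f u v) (j : ℕ) :
    ContinuousOn (nbhdWeight l a b u v j) (Icc 0 T) :=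
  ((continuousOn_shellWeight hab huv (j - 1)).add (continuousOn_shellWeight hab huv j)).add
    (continuousOn_shellWeight hab huv (j + 1))

theorem derivWithin_diffEnergy (hT : 0 < T) (hab : IsWeakSolutionFB l θ T f a b)
    (huv : IsWeakSolutionFB l θ T f u v) (j : ℕ) {t : ℝ} (ht : t ∈ Icc 0 T) :
    derivWithin (diffEnergy a b u v j) (Icc 0 T) t =
      2 * (a j t - u j t) * (derivWithin (a j) (Icc 0 T) t - derivWithin (u j) (Icc 0 T) t)
        + 2 * (b j t - v j t)
          * (derivWithin (b j) (Icc 0 T) t - derivWithin (v j) (Icc 0 T) t) := by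
  have hd {c : ℝ → ℝ} (hc : ContDiffOn ℝ 1 c (Icc 0 T)) :
      HasDerivWithinAt c (derivWithin c (Icc 0 T) t) (Icc 0 T) t :=
    ((hc.differentiableOn one_ne_zero) t ht).hasDerivWithinAt
  have he : HasDerivWithinAt (diffEnergy a b u v j) _ (Icc 0 T) t :=
    (((hd (hab.1 j)).sub (hd (huv.1 j))).fun_pow 2).add
      (((hd (hab.2.1 j)).sub (hd (huv.2.1 j))).fun_pow 2)
  rw [he.derivWithin (uniqueDiffOn_Icc hT t ht), Pi.sub_apply, Pi.sub_apply]
  push_cast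
  ring

theorem derivWithin_diffEnergy_le (hl : 1 ≤ l) (hθ : θ ≤ 2) (hT : 0 < T)
    (hab : IsWeakSolutionFB l θ T f a b) (huv : IsWeakSolutionFB l θ T f u v) (j : ℕ)
    {t Sb : ℝ} (ht : t ∈ Icc 0 T)
    (hSb : ∀ i, (a i t - u i t) ^ 2 ≤ Sb ∧ (b i t - v i t) ^ 2 ≤ Sb) :
    derivWithin (diffEnergy a b u v j) (Icc 0 T) t ≤ 6 * nbhdWeight l a b u v j t * Sb := by
  have hSb0 : 0 ≤ Sb := (sq_nonneg _).trans (hSb 0).1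
  have hEa := hab.2.2.2.2.1 j t ht
  have hEb := hab.2.2.2.2.2 j t ht
  have hEu := huv.2.2.2.2.1 j t ht
  have hEv := huv.2.2.2.2.2 j t ht
  rw [lamPow_two] at hEa hEb hEu hEv
  rw [derivWithin_diffEnergy hT hab huv j ht]
  have hl0 : 0 ≤ l := zero_le_one.trans hl
  have hlam : 0 < l ^ j := pow_pos (by linarith) j
  have hmu := lamPow_nonneg hl0 j θ
  have hmu_le := lamPow_le_pow_mul_pow hl hθ (le_refl j) (le_refl j)
  have hmuN := lamPow_le_pow_mul_pow hl hθ (le_refl j) (Nat.le_succ j)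
  cases j with
  | zero =>
    have key := shell_energy_deriv_le (lamP := 0) (muP := 0) (aP := 0) (bP := 0) (uP := 0)
      (vP := 0) hlam hmu hmu_le hmuN le_rfl (by simp) (by simp [hSb0]) (hSb 0) (hSb (0 + 1))
    simp only [dprev] at hEa hEb hEu hEv
    refine le_trans (le_of_eq ?_) (key.trans ?_)
    · linear_combination (2 * (a 0 t - u 0 t)) * (hEa - hEu)
        + (2 * (b 0 t - v 0 t)) * (hEb - hEv)
    · have := mul_nonneg (shellWeight_nonneg (a := a) (b := b) (u := u) (v := v) hl0 0 t) hSb0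
      simp only [nbhdWeight, shellWeight, lamPow_two, Nat.zero_sub, Nat.succ_eq_add_one] at this ⊢
      linarith
  | succ k =>
    have key := shell_energy_deriv_le hlam hmu hmu_le hmuN (lamPow_nonneg hl0 k θ)
      (lamPow_le_pow_mul_pow hl hθ (Nat.le_succ k) (le_refl k)) (hSb k) (hSb (k + 1))
      (hSb (k + 1 + 1))
    simp only [dprev] at hEa hEb hEu hEv
    refine le_trans (le_of_eq ?_) (key.trans (le_of_eq ?_))
    · linear_combination (2 * (a (k + 1) t - u (k + 1) t)) * (hEa - hEu)
        + (2 * (b (k + 1) t - v (k + 1) t)) * (hEb - hEv)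
    · simp only [nbhdWeight, shellWeight, lamPow_two, Nat.add_sub_cancel]

theorem diffEnergy_le_integral (hl : 1 ≤ l) (hθ : θ ≤ 2) (hT : 0 < T)
    (hab : IsWeakSolutionFB l θ T f a b) (huv : IsWeakSolutionFB l θ T f u v) {j : ℕ}
    (h0 : a j 0 = u j 0 ∧ b j 0 = v j 0) {Sb : ℝ → ℝ}
    (hSb : ∀ τ ∈ Icc 0 T, ∀ i, (a i τ - u i τ) ^ 2 ≤ Sb τ ∧ (b i τ - v i τ) ^ 2 ≤ Sb τ)
    (hint : IntegrableOn (fun τ => 6 * nbhdWeight l a b u v j τ * Sb τ) (Ioc 0 T))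
    {t : ℝ} (ht : t ∈ Icc 0 T) :
    diffEnergy a b u v j t ≤ ∫ τ in Ioc 0 t, 6 * nbhdWeight l a b u v j τ * Sb τ := by
  have hC := contDiffOn_diffEnergy hab huv j
  rw [← intervalIntegral.integral_of_le ht.1]
  calc diffEnergy a b u v j t
        = ∫ τ in 0..t, derivWithin (diffEnergy a b u v j) (Icc 0 T) τ := by
        rw [integral_derivWithin_Icc_of_contDiffOn hC ht]
        simp [diffEnergy, h0.1, h0.2]
    _ ≤ _ := intervalIntegral.integral_mono_on ht.1
        (((hC.continuousOn_derivWithin (uniqueDiffOn_Icc hT) le_rfl).mono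
          (Icc_subset_Icc_right ht.2)).intervalIntegrable_of_Icc ht.1)
        ((intervalIntegrable_iff_integrableOn_Ioc_of_le ht.1).2
          (hint.mono_set (Ioc_subset_Ioc_right ht.2)))
        fun τ hτ => derivWithin_diffEnergy_le hl hθ hT hab huv j ⟨hτ.1, hτ.2.trans ht.2⟩
          (hSb τ ⟨hτ.1, hτ.2.trans ht.2⟩)

theorem summable_diffEnergy (hab : IsWeakSolutionFB l θ T f a b)
    (huv : IsWeakSolutionFB l θ T f u v) {t : ℝ} (ht : t ∈ Icc 0 T) :
    Summable fun j => diffEnergy a b u v j t :=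
  (summable_sq_sub (hab.2.2.1 t ht) (huv.2.2.1 t ht)).add
    (summable_sq_sub (hab.2.2.2.1 t ht) (huv.2.2.2.1 t ht))

theorem sq_sub_le_tsum_diffEnergy (hab : IsWeakSolutionFB l θ T f a b)
    (huv : IsWeakSolutionFB l θ T f u v) {t : ℝ} (ht : t ∈ Icc 0 T) (i : ℕ) :
    (a i t - u i t) ^ 2 ≤ ∑' j, diffEnergy a b u v j t ∧
      (b i t - v i t) ^ 2 ≤ ∑' j, diffEnergy a b u v j t := by
  have hle := (summable_diffEnergy hab huv ht).le_tsum i fun j _ => diffEnergy_nonneg j t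
  exact ⟨(le_add_of_nonneg_right (sq_nonneg _)).trans hle,
    (le_add_of_nonneg_left (sq_nonneg _)).trans hle⟩

theorem tsum_diffEnergy_le (hab : IsWeakSolutionFB l θ T f a b)
    (huv : IsWeakSolutionFB l θ T f u v) {Mab Muv : ℝ}
    (hMab : ∀ t ∈ Icc 0 T, (∑' j, (a j t) ^ 2) + (∑' j, (b j t) ^ 2) ≤ Mab)
    (hMuv : ∀ t ∈ Icc 0 T, (∑' j, (u j t) ^ 2) + (∑' j, (v j t) ^ 2) ≤ Muv)
    {t : ℝ} (ht : t ∈ Icc 0 T) : ∑' j, diffEnergy a b u v j t ≤ 2 * Mab + 2 * Muv := by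
  unfold diffEnergy
  rw [Summable.tsum_add (summable_sq_sub (hab.2.2.1 t ht) (huv.2.2.1 t ht))
    (summable_sq_sub (hab.2.2.2.1 t ht) (huv.2.2.2.1 t ht))]
  linarith [tsum_sq_sub_le (hab.2.2.1 t ht) (huv.2.2.1 t ht),
    tsum_sq_sub_le (hab.2.2.2.1 t ht) (huv.2.2.2.1 t ht), hMab t ht, hMuv t ht]

theorem integrableOn_nbhdWeight (hab : IsWeakSolutionFB l θ T f a b)
    (huv : IsWeakSolutionFB l θ T f u v) (j : ℕ) {t : ℝ} (ht : t ≤ T) :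
    IntegrableOn (nbhdWeight l a b u v j) (Ioc 0 t) :=
  (continuousOn_nbhdWeight hab huv j).integrableOn_Icc.mono_set
    (Ioc_subset_Icc_self.trans (Icc_subset_Icc_right ht))

theorem aestronglyMeasurable_tsum_diffEnergy (hab : IsWeakSolutionFB l θ T f a b)
    (huv : IsWeakSolutionFB l θ T f u v) {t : ℝ} (ht : t ≤ T) :
    AEStronglyMeasurable (fun τ => ∑' j, diffEnergy a b u v j τ) (volume.restrict (Ioc 0 t)) :=
  (AEMeasurable.tsum fun j => ((contDiffOn_diffEnergy hab huv j).continuousOn.mono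
    (Ioc_subset_Icc_self.trans (Icc_subset_Icc_right ht))).aemeasurable
      measurableSet_Ioc).aestronglyMeasurable

theorem summable_integral_nbhdWeight (hl : 0 ≤ l) (hab : IsWeakSolutionFB l θ T f a b)
    (huv : IsWeakSolutionFB l θ T f u v)
    (hab_H1 : Summable fun j => ∫ t in (0:ℝ)..T, lamPow l j 2 * ((a j t) ^ 2 + (b j t) ^ 2))
    (huv_H1 : Summable fun j => ∫ t in (0:ℝ)..T, lamPow l j 2 * ((u j t) ^ 2 + (v j t) ^ 2))
    {t : ℝ} (ht : t ∈ Icc 0 T) :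
    Summable fun j => ∫ τ in Ioc 0 t, nbhdWeight l a b u v j τ := by
  have hT : 0 ≤ T := ht.1.trans ht.2
  have hD {c d : ℕ → ℝ → ℝ} (hcd : IsWeakSolutionFB l θ T f c d) (i : ℕ) :
      IntegrableOn (fun τ => lamPow l i 2 * ((c i τ) ^ 2 + (d i τ) ^ 2)) (Ioc 0 T) :=
    (continuousOn_const.mul (((hcd.1 i).continuousOn.pow 2).add
      ((hcd.2.1 i).continuousOn.pow 2))).integrableOn_Icc.mono_set Ioc_subset_Icc_self
  have hW_int (i : ℕ) {s : ℝ} (hs : s ≤ T) : IntegrableOn (shellWeight l a b u v i) (Ioc 0 s) :=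
    ((continuousOn_shellWeight hab huv i).integrableOn_Icc).mono_set
      (Ioc_subset_Icc_self.trans (Icc_subset_Icc_right hs))
  have hW : Summable fun i => ∫ τ in Ioc 0 T, shellWeight l a b u v i τ := by
    refine (hab_H1.add huv_H1).congr fun i => ?_
    rw [intervalIntegral.integral_of_le hT, intervalIntegral.integral_of_le hT,
      ← integral_add (hD hab i) (hD huv i)]
    exact integral_congr_ae (ae_of_all _ fun τ => by simp only [shellWeight]; ring)
  have hWt : Summable fun i => ∫ τ in Ioc 0 t, shellWeight l a b u v i τ :=
    hW.of_nonneg_of_le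
      (fun i => setIntegral_nonneg measurableSet_Ioc fun τ _ => shellWeight_nonneg hl i τ)
      fun i => setIntegral_mono_set (hW_int i le_rfl)
        (ae_of_all _ fun τ => shellWeight_nonneg hl i τ)
        (Ioc_subset_Ioc_right ht.2).eventuallyLE
  refine (summable_prev_add_add_next hWt).congr fun j => ?_
  simp only [nbhdWeight]
  rw [integral_add (f := fun τ => shellWeight l a b u v (j - 1) τ + shellWeight l a b u v j τ)
    ((hW_int _ ht.2).add (hW_int _ ht.2)) (hW_int _ ht.2),
    integral_add (hW_int _ ht.2) (hW_int _ ht.2)]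

theorem tsum_diffEnergy_eq_zero (hl : 1 ≤ l) (hθ : θ ≤ 2) (hT : 0 < T)
    (hab : IsWeakSolutionFB l θ T f a b) (huv : IsWeakSolutionFB l θ T f u v)
    (hab_bdd : ∃ M, ∀ t ∈ Icc 0 T, (∑' j, (a j t) ^ 2) + (∑' j, (b j t) ^ 2) ≤ M)
    (huv_bdd : ∃ M, ∀ t ∈ Icc 0 T, (∑' j, (u j t) ^ 2) + (∑' j, (v j t) ^ 2) ≤ M)
    (hab_H1 : Summable fun j => ∫ t in (0:ℝ)..T, lamPow l j 2 * ((a j t) ^ 2 + (b j t) ^ 2))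
    (huv_H1 : Summable fun j => ∫ t in (0:ℝ)..T, lamPow l j 2 * ((u j t) ^ 2 + (v j t) ^ 2))
    (h0 : ∀ j, a j 0 = u j 0 ∧ b j 0 = v j 0) :
    EqOn (fun t => ∑' j, diffEnergy a b u v j t) 0 (Icc 0 T) := by
  obtain ⟨Mab, hMab⟩ := hab_bdd
  obtain ⟨Muv, hMuv⟩ := huv_bdd
  set S : ℝ → ℝ := fun t => ∑' j, diffEnergy a b u v j t
  set G : ℕ → ℝ → ℝ := fun j τ => 6 * nbhdWeight l a b u v j τ
  have hl0 : 0 ≤ l := zero_le_one.trans hl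
  have hS0 (t : ℝ) : 0 ≤ S t := tsum_nonneg fun j => diffEnergy_nonneg j t
  have hG0 (j : ℕ) (τ : ℝ) : 0 ≤ G j τ := mul_nonneg (by norm_num) (nbhdWeight_nonneg hl0 j τ)
  have hG (t : ℝ) (ht : t ∈ Icc 0 T) : Summable fun j => ∫ τ in Ioc 0 t, G j τ := by
    simpa only [G, integral_const_mul] using
      (summable_integral_nbhdWeight hl0 hab huv hab_H1 huv_H1 ht).mul_left 6
  have hGS (t : ℝ) (ht : t ∈ Icc 0 T) :
      (∀ j, IntegrableOn (fun τ => G j τ * S τ) (Ioc 0 t)) ∧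
        Summable fun j => ∫ τ in Ioc 0 t, ‖G j τ * S τ‖ := by
    obtain ⟨hint, hsum⟩ := summable_integral_mul_of_le
      (fun j => (integrableOn_nbhdWeight hab huv j ht.2).const_mul 6) hG0 (hG t ht)
      (aestronglyMeasurable_tsum_diffEnergy hab huv ht.2) hS0
      ((ae_restrict_iff' measurableSet_Ioc).2 (ae_of_all _ fun τ hτ =>
        tsum_diffEnergy_le hab huv hMab hMuv ⟨hτ.1.le, hτ.2.trans ht.2⟩))
    exact ⟨hint, by simpa only [Real.norm_of_nonneg (mul_nonneg (hG0 _ _) (hS0 _))] using hsum⟩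
  have hTT : T ∈ Icc 0 T := ⟨hT.le, le_rfl⟩
  have hgS (τ : ℝ) : (∑' j, G j τ) * S τ = ∑' j, G j τ * S τ := tsum_mul_right.symm
  refine eqOn_zero_of_le_integral_mul (g := fun τ => ∑' j, G j τ) ?_ ?_
    (fun τ _ => tsum_nonneg (hG0 · τ)) (fun t _ => hS0 t) fun t ht => ?_
  · rw [intervalIntegrable_iff_integrableOn_Ioc_of_le hT.le]
    exact integrable_tsum_of_summable_integral_norm
      (fun j => (integrableOn_nbhdWeight hab huv j le_rfl).const_mul 6)
      (by simpa only [Real.norm_of_nonneg (hG0 _ _)] using hG T hTT)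
  · rw [intervalIntegrable_iff_integrableOn_Ioc_of_le hT.le]
    simp_rw [hgS]
    exact integrable_tsum_of_summable_integral_norm (hGS T hTT).1 (hGS T hTT).2
  · calc S t ≤ ∑' j, ∫ τ in Ioc 0 t, G j τ * S τ :=
          Summable.tsum_le_tsum (fun j => diffEnergy_le_integral hl hθ hT hab huv (h0 j)
            (fun τ hτ => sq_sub_le_tsum_diffEnergy hab huv hτ) ((hGS T hTT).1 j) ht)
            (summable_diffEnergy hab huv ht) ((hGS t ht).2.of_norm_bounded fun j =>
              norm_integral_le_integral_norm _)
      _ = ∫ τ in 0..t, (∑' j, G j τ) * S τ := by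
          simp_rw [intervalIntegral.integral_of_le ht.1, hgS]
          exact integral_tsum_of_summable_integral_norm (hGS t ht).1 (hGS t ht).2

end DifferenceEnergy

theorem uniqueness_LerayHopf_dyadic_MHD_fb_general
    (l θ T : ℝ) (hl : 1 < l) (hθ2 : θ ≤ 2)
    (a0 b0 : ℕ → ℝ)
    (f : ℕ → ℝ → ℝ)
    (a b u v : ℕ → ℝ → ℝ)
    (hab : IsLerayHopfFB l θ T f a b)
    (huv : IsLerayHopfFB l θ T f u v)
    (hinita : ∀ j, a j 0 = a0 j) (hinitb : ∀ j, b j 0 = b0 j)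
    (hinitu : ∀ j, u j 0 = a0 j) (hinitv : ∀ j, v j 0 = b0 j) :
    ∀ j, ∀ t ∈ Icc 0 T, a j t = u j t ∧ b j t = v j t := by
  have h0 (j : ℕ) : a j 0 = u j 0 ∧ b j 0 = v j 0 :=
    ⟨(hinita j).trans (hinitu j).symm, (hinitb j).trans (hinitv j).symm⟩
  intro j t ht
  rcases ht.1.eq_or_lt with rfl | ht0
  · exact h0 j
  have hS : ∑' i, diffEnergy a b u v i t = 0 :=
    tsum_diffEnergy_eq_zero hl.le hθ2 (ht0.trans_le ht.2) hab.1 huv.1 hab.2.1 huv.2.1 hab.2.2.1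
      huv.2.2.1 h0 ht
  obtain ⟨ha, hb⟩ := sq_sub_le_tsum_diffEnergy hab.1 huv.1 ht j
  rw [hS] at ha hb
  exact ⟨sub_eq_zero.1 (pow_eq_zero_iff two_ne_zero |>.1 (le_antisymm ha (sq_nonneg _))),
    sub_eq_zero.1 (pow_eq_zero_iff two_ne_zero |>.1 (le_antisymm hb (sq_nonneg _)))⟩

/-- uniqueness of the Leray-Hopf solution to the dyadic MHD model
with forward and backward energy cascade when `0 < θ ≤ 2`: any two Leray-Hopf
solutions with the same `l²` initial data and the same forcing
`f ∈ L²(0,T; H^{-1})` coincide on `[0,T]`. -/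
theorem uniqueness_LerayHopf_dyadic_MHD_fb
    (l θ T : ℝ) (hl : 1 < l) (hθ1 : 0 < θ) (hθ2 : θ ≤ 2) (hT : 0 < T)
    (a0 b0 : ℕ → ℝ)
    (ha0 : Summable fun j => (a0 j) ^ 2) (hb0 : Summable fun j => (b0 j) ^ 2)
    (f : ℕ → ℝ → ℝ)
    (hfi : ∀ j, IntervalIntegrable (fun t => (f j t) ^ 2) volume 0 T)
    (hf : Summable fun j => lamPow l j (-2) * ∫ t in (0:ℝ)..T, (f j t) ^ 2)
    (a b u v : ℕ → ℝ → ℝ)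
    (hab : IsLerayHopfFB l θ T f a b)
    (huv : IsLerayHopfFB l θ T f u v)
    (hinita : ∀ j, a j 0 = a0 j) (hinitb : ∀ j, b j 0 = b0 j)
    (hinitu : ∀ j, u j 0 = a0 j) (hinitv : ∀ j, v j 0 = b0 j) :
    ∀ j, ∀ t ∈ Icc 0 T, a j t = u j t ∧ b j t = v j t :=
  uniqueness_LerayHopf_dyadic_MHD_fb_general l θ T hl hθ2 a0 b0 f a b u v hab huv hinita hinitb
    hinitu hinitv
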